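/- There is no model structure on the category Flow whose class of cofibrations is 𝕀⁻¹(C_DK) and whose class of weak equivalences is 𝕀⁻¹(W_DK); that is, the Ilias model structure on topologically enriched small categories cannot be left-lifted to flows along the left adjoint 𝕀. -/

import Mathlib

/-!
Factor `R : {0,1} → {0}` as a cofibration `i : {0,1} → Z` followed by a trivial fibration
`p : Z → {0}`. The functor `{0 ≅ 1} → 1` has the right lifting property with respect to
`𝕀(I^gl ∪ {C})`, hence with respect to `𝕀(i)`; lifting the identity of `{0,1}` shows that `i` is
injective on states. On the other hand `𝕀(p)` is a Dwyer–Kan equivalence onto `𝕀({0})`, whose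
morphism spaces are points, so every morphism space of `𝕀(Z)` is path-connected. For states `s`
and `t` of `Z`, a composite `s → t → s` in `𝕀(Z)` is then joined to the identity of `s`, and
mapping `𝕀(Z)` into a category with discrete morphism spaces in which no composite through
another object is an identity forces `s = t`. So `Z` has at most one state, contradicting the
injectivity of `i`.
-/

open CategoryTheory

noncomputable section

/-! ### Flows: small semicategories enriched in topological spaces -/

structure DFlow : Type 1 where
  States : Type
  Path : States → States → Type
  str : ∀ α β, TopologicalSpace (Path α β)
  comp : ∀ {α β γ : States}, Path α β → Path β γ → Path α γ
  continuous_comp : ∀ α β γ, Continuous (fun p : Path α β × Path β γ => comp p.1 p.2)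
  assoc : ∀ {α β γ δ : States} (x : Path α β) (y : Path β γ) (z : Path γ δ),
    comp (comp x y) z = comp x (comp y z)

attribute [instance] DFlow.str

/-- Morphisms of flows. -/
structure FlowHom (X Y : DFlow) where
  toFun : X.States → Y.States
  map : ∀ {α β : X.States}, X.Path α β → Y.Path (toFun α) (toFun β)
  continuous_map : ∀ α β : X.States, Continuous fun p : X.Path α β => map p
  map_comp : ∀ {α β γ : X.States} (x : X.Path α β) (y : X.Path β γ),
    map (X.comp x y) = Y.comp (map x) (map y)

instance : Category DFlow where
  Hom := FlowHom
  id X := ⟨id, fun p => p, fun _ _ => continuous_id, fun _ _ => rfl⟩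
  comp f g := ⟨g.toFun ∘ f.toFun, fun p => g.map (f.map p),
    fun α β => (g.continuous_map _ _).comp (f.continuous_map _ _),
    fun x y => by simp only [f.map_comp, g.map_comp]⟩

lemma continuous_of_isEmpty {X Y : Type} [TopologicalSpace X] [TopologicalSpace Y]
    (h : IsEmpty X) (f : X → Y) : Continuous f :=
  continuous_iff_continuousAt.mpr fun x => h.elim x

/-- A set viewed as a flow with empty spaces of execution paths. -/
def DFlow.ofSet (S : Type) : DFlow where
  States := S
  Path _ _ := Empty
  str _ _ := ⊥
  comp x _ := x.elim
  continuous_comp _ _ _ := continuous_of_isEmpty (inferInstanceAs (IsEmpty (Empty × Empty))) _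
  assoc x _ _ := x.elim

/-- The empty flow. -/
def emptyFlow : DFlow := DFlow.ofSet Empty

/-- The flow `{0}` with one state and no execution path. -/
def pointFlow : DFlow := DFlow.ofSet PUnit

/-- The flow `{0, 1}` with two states and no execution path. -/
def twoFlow : DFlow := DFlow.ofSet Bool

/-- The terminal flow. -/
def terminalFlow : DFlow where
  States := PUnit
  Path _ _ := PUnit
  str _ _ := ⊥
  comp _ _ := PUnit.unit
  continuous_comp _ _ _ := continuous_const
  assoc _ _ _ := rfl

/-- The map of flows `C : ∅ → {0}`. -/
def Cmap : emptyFlow ⟶ pointFlow :=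
  ⟨fun x => x.elim, fun {α} _ _ => α.elim, fun α _ => α.elim, fun {α} _ _ _ _ => α.elim⟩

/-- The map of flows `R : {0,1} → {0}`. -/
def Rmap : twoFlow ⟶ pointFlow :=
  ⟨fun _ => PUnit.unit, fun p => p.elim, fun _ _ => @continuous_of_isEmpty _ _ (twoFlow.str _ _) (pointFlow.str _ _) (inferInstanceAs (IsEmpty Empty)) _, fun x _ => x.elim⟩

/-- The map of flows `C⁺ : {0} → {0,1}`. -/
def Cplus : pointFlow ⟶ twoFlow :=
  ⟨fun _ => false, fun p => p.elim, fun _ _ => @continuous_of_isEmpty _ _ (pointFlow.str _ _) (twoFlow.str _ _) (inferInstanceAs (IsEmpty Empty)) _, fun x _ => x.elim⟩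

/-- The canonical map from the empty flow. -/
def DFlow.fromEmpty (X : DFlow) : emptyFlow ⟶ X :=
  ⟨fun x => x.elim, fun {α} _ => α.elim, fun α _ => α.elim, fun {α} _ _ _ _ => α.elim⟩

/-- The canonical map to the terminal flow. -/
def DFlow.toTerminal (X : DFlow) : X ⟶ terminalFlow :=
  ⟨fun _ => PUnit.unit, fun _ => PUnit.unit,
    fun _ _ => letI := terminalFlow.str PUnit.unit PUnit.unit; continuous_const, fun _ _ => rfl⟩

/-! ### Globes -/

/-- The path spaces of the globe `Glob(Z)`. -/
def GlobPath (Z : Type) : Bool → Bool → Type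
  | false, true => Z
  | _, _ => Empty

instance globPathTop (Z : Type) [TopologicalSpace Z] :
    ∀ a b, TopologicalSpace (GlobPath Z a b)
  | false, true => inferInstanceAs (TopologicalSpace Z)
  | false, false => ⊥
  | true, false => ⊥
  | true, true => ⊥

instance globPathIsEmpty (Z : Type) : ∀ (a : Bool), IsEmpty (GlobPath Z a a)
  | false => inferInstanceAs (IsEmpty Empty)
  | true => inferInstanceAs (IsEmpty Empty)

/-- The globe of a topological space. -/
def DFlow.glob (Z : Type) [TopologicalSpace Z] : DFlow where
  States := Bool
  Path := GlobPath Z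
  str := globPathTop Z
  comp {a b c} x y :=
    match a, b, c, x, y with
    | false, false, _, x, _ => x.elim
    | false, true, false, _, y => y.elim
    | false, true, true, _, y => y.elim
    | true, false, _, x, _ => x.elim
    | true, true, _, x, _ => x.elim
  continuous_comp a b c :=
    match a, b, c with
    | false, false, false => continuous_of_isEmpty ⟨fun p => p.1.elim⟩ _
    | false, false, true => continuous_of_isEmpty ⟨fun p => p.1.elim⟩ _
    | false, true, false => continuous_of_isEmpty ⟨fun p => p.2.elim⟩ _
    | false, true, true => continuous_of_isEmpty ⟨fun p => p.2.elim⟩ _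
    | true, false, false => continuous_of_isEmpty ⟨fun p => p.1.elim⟩ _
    | true, false, true => continuous_of_isEmpty ⟨fun p => p.1.elim⟩ _
    | true, true, false => continuous_of_isEmpty ⟨fun p => p.1.elim⟩ _
    | true, true, true => continuous_of_isEmpty ⟨fun p => p.1.elim⟩ _
  assoc {a b c d} x y z :=
    match a, b, c, d, x, y, z with
    | false, false, _, _, x, _, _ => x.elim
    | false, true, false, _, _, y, _ => y.elim
    | false, true, true, false, _, y, _ => y.elim
    | false, true, true, true, _, y, _ => y.elim
    | true, _, _, _, x, _, _ => x.elim

/-- The functorial action of `Glob` on a continuous map. -/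
def DFlow.globMap {Z W : Type} [TopologicalSpace Z] [TopologicalSpace W] (f : Z → W)
    (hf : Continuous f) : DFlow.glob Z ⟶ DFlow.glob W where
  toFun := id
  map {a b} x :=
    match a, b, x with
    | false, true, x => f x
    | false, false, x => x.elim
    | true, false, x => x.elim
    | true, true, x => x.elim
  continuous_map a b :=
    match a, b with
    | false, true => hf
    | false, false => @continuous_of_isEmpty _ _ ((DFlow.glob Z).str _ _) ((DFlow.glob W).str _ _)
        (inferInstanceAs (IsEmpty Empty)) _
    | true, false => @continuous_of_isEmpty _ _ ((DFlow.glob Z).str _ _) ((DFlow.glob W).str _ _)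
        (inferInstanceAs (IsEmpty Empty)) _
    | true, true => @continuous_of_isEmpty _ _ ((DFlow.glob Z).str _ _) ((DFlow.glob W).str _ _)
        (inferInstanceAs (IsEmpty Empty)) _
  map_comp {a b c} x y :=
    match a, b, c, x, y with
    | false, false, _, x, _ => x.elim
    | false, true, false, _, y => y.elim
    | false, true, true, _, y => y.elim
    | true, _, _, x, _ => x.elim

/-- The directed segment, the globe of a one-point space. -/
def Iseg : DFlow := DFlow.glob PUnit

/-! ### Disks and spheres -/

/-- The `n`-dimensional disk `D^n`. -/
def gDisk (n : ℕ) : Type := (Metric.closedBall (0 : EuclideanSpace ℝ (Fin n)) 1 : Set _)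

/-- The sphere `S^{n-1}`, boundary of the `n`-dimensional disk. -/
def gSphere (n : ℕ) : Type := (Metric.sphere (0 : EuclideanSpace ℝ (Fin n)) 1 : Set _)

instance (n : ℕ) : TopologicalSpace (gDisk n) :=
  inferInstanceAs (TopologicalSpace (Metric.closedBall (0 : EuclideanSpace ℝ (Fin n)) 1))

instance (n : ℕ) : TopologicalSpace (gSphere n) :=
  inferInstanceAs (TopologicalSpace (Metric.sphere (0 : EuclideanSpace ℝ (Fin n)) 1))

/-- The inclusion `S^{n-1} ⊆ D^n`. -/
def sphereIncl (n : ℕ) : gSphere n → gDisk n :=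
  fun x => ⟨x.1, Metric.sphere_subset_closedBall x.2⟩

lemma continuous_sphereIncl (n : ℕ) : Continuous (sphereIncl n) :=
  Continuous.subtype_mk continuous_subtype_val _

/-- The generating cofibration `c_n : Glob(S^{n-1}) → Glob(D^n)`. -/
def cFlow (n : ℕ) : DFlow.glob (gSphere n) ⟶ DFlow.glob (gDisk n) :=
  DFlow.globMap (sphereIncl n) (continuous_sphereIncl n)

/-- `{0}` as a subspace of `ℝ`. -/
def zeroSpace : Type := ({(0 : ℝ)} : Set ℝ)

instance : TopologicalSpace zeroSpace := inferInstanceAs (TopologicalSpace ({(0:ℝ)} : Set ℝ))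

/-- The inclusion `D^n × {0} → D^n × [0,1]`. -/
def cylIncl (n : ℕ) : gDisk n × zeroSpace → gDisk n × unitInterval :=
  fun p => (p.1, ⟨p.2.1, by
    rcases p.2 with ⟨x, hx⟩
    simp only [Set.mem_singleton_iff] at hx
    subst hx
    exact unitInterval.zero_mem⟩)

lemma continuous_cylIncl (n : ℕ) : Continuous (cylIncl n) :=
  continuous_fst.prodMk (Continuous.subtype_mk (continuous_subtype_val.comp continuous_snd) _)

/-- The generating trivial cofibration `Glob(D^n × {0}) → Glob(D^n × [0,1])`. -/
def jFlow (n : ℕ) : DFlow.glob (gDisk n × zeroSpace) ⟶ DFlow.glob (gDisk n × unitInterval) :=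
  DFlow.globMap (cylIncl n) (continuous_cylIncl n)

/-! ### Generating sets of maps, as morphism properties -/

/-- The set `I^gl = {c_n : Glob(S^{n-1}) → Glob(D^n) | n ≥ 0}`. -/
def Igl : MorphismProperty DFlow := fun X Y f =>
  ∃ n : ℕ, X = DFlow.glob (gSphere n) ∧ Y = DFlow.glob (gDisk n) ∧ HEq f (cFlow n)

/-- The set `I^gl_{≥1} = {c_n | n ≥ 1}`. -/
def IglGeOne : MorphismProperty DFlow := fun X Y f =>
  ∃ n : ℕ, 1 ≤ n ∧ X = DFlow.glob (gSphere n) ∧ Y = DFlow.glob (gDisk n) ∧ HEq f (cFlow n)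

/-- The set `J^gl`. -/
def Jgl : MorphismProperty DFlow := fun X Y f =>
  ∃ n : ℕ, X = DFlow.glob (gDisk n × zeroSpace) ∧ Y = DFlow.glob (gDisk n × unitInterval) ∧
    HEq f (jFlow n)

/-- The singleton `{C}`. -/
def Cprop : MorphismProperty DFlow := fun X Y f =>
  X = emptyFlow ∧ Y = pointFlow ∧ HEq f Cmap

/-- The singleton `{R}`. -/
def Rprop : MorphismProperty DFlow := fun X Y f =>
  X = twoFlow ∧ Y = pointFlow ∧ HEq f Rmap

/-- The set `I^gl ∪ {C}`. -/
def IglC : MorphismProperty DFlow := fun _ _ f => Igl f ∨ Cprop f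

/-- The set `I^gl ∪ {C, R}`, generating cofibrations of the q-model structure. -/
def IglCR : MorphismProperty DFlow := fun _ _ f => Igl f ∨ Cprop f ∨ Rprop f

/-! ### Lifting properties, cofibration and injectivity classes -/

/-- `rlpClass S` is `inj(S)`: maps with the RLP with respect to every map of `S`. -/
def rlpClass {M : Type _} [Category M] (S : MorphismProperty M) : MorphismProperty M :=
  fun _ _ p => ∀ {A B : M} (i : A ⟶ B), S i → HasLiftingProperty i p

/-- `llpClass S`: maps with the LLP with respect to every map of `S`. -/
def llpClass {M : Type _} [Category M] (S : MorphismProperty M) : MorphismProperty M :=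
  fun _ _ i => ∀ {A B : M} (p : A ⟶ B), S p → HasLiftingProperty i p

/-- `cofClass S` is `cof(S) = llp(inj(S))`. -/
def cofClass {M : Type _} [Category M] (S : MorphismProperty M) : MorphismProperty M :=
  llpClass (rlpClass S)

/-! ### Model structures -/

/-- A model structure on a category, specified by its weak equivalences,
cofibrations and fibrations. -/
structure ModelStructure (M : Type _) [Category M] where
  W : MorphismProperty M
  C : MorphismProperty M
  F : MorphismProperty M
  w_comp : ∀ {X Y Z : M} (f : X ⟶ Y) (g : Y ⟶ Z), W f → W g → W (f ≫ g)
  w_cancel_left : ∀ {X Y Z : M} (f : X ⟶ Y) (g : Y ⟶ Z), W f → W (f ≫ g) → W g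
  w_cancel_right : ∀ {X Y Z : M} (f : X ⟶ Y) (g : Y ⟶ Z), W g → W (f ≫ g) → W f
  w_retract : ∀ {X Y X' Y' : M} (f : X ⟶ Y) (g : X' ⟶ Y') (iX : X ⟶ X') (rX : X' ⟶ X)
    (iY : Y ⟶ Y') (rY : Y' ⟶ Y), iX ≫ rX = 𝟙 X → iY ≫ rY = 𝟙 Y →
    iX ≫ g = f ≫ iY → g ≫ rY = rX ≫ f → W g → W f
  cof_eq : C = llpClass (fun _ _ p => F p ∧ W p)
  fib_eq : F = rlpClass (fun _ _ i => C i ∧ W i)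
  factor_triv_cof : ∀ {X Y : M} (f : X ⟶ Y),
    ∃ (Z : M) (i : X ⟶ Z) (p : Z ⟶ Y), C i ∧ W i ∧ F p ∧ i ≫ p = f
  factor_triv_fib : ∀ {X Y : M} (f : X ⟶ Y),
    ∃ (Z : M) (i : X ⟶ Z) (p : Z ⟶ Y), C i ∧ F p ∧ W p ∧ i ≫ p = f

/-! ### The class of weak equivalences `W̄_DK` -/

/-- A flow "is a set": it has no execution path. -/
def DFlow.IsSetFlow (X : DFlow) : Prop := ∀ α β : X.States, IsEmpty (X.Path α β)

/-- A flow has at least one execution path. -/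
def DFlow.HasExecPath (X : DFlow) : Prop := ∃ α β : X.States, Nonempty (X.Path α β)

/-- The class `W̄_DK` of maps of flows. -/
def WbarDK : MorphismProperty DFlow := fun X Y _ =>
  (IsEmpty X.States ∧ IsEmpty Y.States) ∨
  (Nonempty X.States ∧ Nonempty Y.States ∧ X.IsSetFlow ∧ Y.IsSetFlow) ∨
  (X.HasExecPath ∧ Y.HasExecPath)

/-! ### Binary coproducts of flows -/

/-- Path spaces of the coproduct of two flows. -/
def SumPath (X Y : DFlow) : X.States ⊕ Y.States → X.States ⊕ Y.States → Type
  | .inl a, .inl b => X.Path a b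
  | .inr a, .inr b => Y.Path a b
  | _, _ => Empty

instance sumPathTop (X Y : DFlow) : ∀ a b, TopologicalSpace (SumPath X Y a b)
  | .inl a, .inl b => inferInstanceAs (TopologicalSpace (X.Path a b))
  | .inr a, .inr b => inferInstanceAs (TopologicalSpace (Y.Path a b))
  | .inl _, .inr _ => ⊥
  | .inr _, .inl _ => ⊥

/-- The coproduct of two flows. -/
def DFlow.sum (X Y : DFlow) : DFlow where
  States := X.States ⊕ Y.States
  Path := SumPath X Y
  str := sumPathTop X Y
  comp {a b c} x y :=
    match a, b, c, x, y with
    | .inl _, .inl _, .inl _, x, y => X.comp x y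
    | .inr _, .inr _, .inr _, x, y => Y.comp x y
    | .inl _, .inl _, .inr _, _, y => y.elim
    | .inl _, .inr _, _, x, _ => x.elim
    | .inr _, .inl _, _, x, _ => x.elim
    | .inr _, .inr _, .inl _, _, y => y.elim
  continuous_comp a b c :=
    match a, b, c with
    | .inl _, .inl _, .inl _ => X.continuous_comp _ _ _
    | .inr _, .inr _, .inr _ => Y.continuous_comp _ _ _
    | .inl _, .inl _, .inr _ => continuous_of_isEmpty ⟨fun p => p.2.elim⟩ _
    | .inl _, .inr _, _ => continuous_of_isEmpty ⟨fun p => p.1.elim⟩ _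
    | .inr _, .inl _, _ => continuous_of_isEmpty ⟨fun p => p.1.elim⟩ _
    | .inr _, .inr _, .inl _ => continuous_of_isEmpty ⟨fun p => p.2.elim⟩ _
  assoc {a b c d} x y z :=
    match a, b, c, d, x, y, z with
    | .inl _, .inl _, .inl _, .inl _, x, y, z => X.assoc x y z
    | .inr _, .inr _, .inr _, .inr _, x, y, z => Y.assoc x y z
    | .inl _, .inl _, .inl _, .inr _, _, _, z => z.elim
    | .inl _, .inl _, .inr _, _, _, y, _ => y.elim
    | .inl _, .inr _, _, _, x, _, _ => x.elim
    | .inr _, .inl _, _, _, x, _, _ => x.elim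
    | .inr _, .inr _, .inl _, _, _, y, _ => y.elim
    | .inr _, .inr _, .inr _, .inl _, _, _, z => z.elim

/-- The coproduct of two maps of flows. -/
def DFlow.sumMap {X X' Y Y' : DFlow} (f : X ⟶ X') (g : Y ⟶ Y') : X.sum Y ⟶ X'.sum Y' where
  toFun := Sum.map f.toFun g.toFun
  map {a b} x :=
    match a, b, x with
    | .inl _, .inl _, x => f.map x
    | .inr _, .inr _, x => g.map x
    | .inl _, .inr _, x => x.elim
    | .inr _, .inl _, x => x.elim
  continuous_map a b :=
    match a, b with
    | .inl _, .inl _ => f.continuous_map _ _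
    | .inr _, .inr _ => g.continuous_map _ _
    | .inl _, .inr _ => @continuous_of_isEmpty _ _ ((X.sum Y).str _ _) ((X'.sum Y').str _ _)
        (inferInstanceAs (IsEmpty Empty)) _
    | .inr _, .inl _ => @continuous_of_isEmpty _ _ ((X.sum Y).str _ _) ((X'.sum Y').str _ _)
        (inferInstanceAs (IsEmpty Empty)) _
  map_comp {a b c} x y :=
    match a, b, c, x, y with
    | .inl _, .inl _, .inl _, x, y => f.map_comp x y
    | .inr _, .inr _, .inr _, x, y => g.map_comp x y
    | .inl _, .inl _, .inr _, _, y => y.elim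
    | .inl _, .inr _, _, x, _ => x.elim
    | .inr _, .inl _, _, x, _ => x.elim
    | .inr _, .inr _, .inl _, _, y => y.elim

/-- The map `c₀⁺ = id_{I⃗} ⊔ c₀ : I⃗ ⊔ Glob(S^{-1}) → I⃗ ⊔ Glob(D⁰)`. -/
def cZeroPlus : Iseg.sum (DFlow.glob (gSphere 0)) ⟶ Iseg.sum (DFlow.glob (gDisk 0)) :=
  DFlow.sumMap (𝟙 Iseg) (cFlow 0)

/-- The singleton `{C⁺}`. -/
def CplusProp : MorphismProperty DFlow := fun X Y f =>
  X = pointFlow ∧ Y = twoFlow ∧ HEq f Cplus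

/-- The singleton `{c₀⁺}`. -/
def cZeroPlusProp : MorphismProperty DFlow := fun X Y f =>
  X = Iseg.sum (DFlow.glob (gSphere 0)) ∧ Y = Iseg.sum (DFlow.glob (gDisk 0)) ∧ HEq f cZeroPlus

/-- The set `{C⁺, c₀⁺} ∪ J^gl ∪ I^gl_{≥1}`. -/
def TrivCofGen : MorphismProperty DFlow := fun _ _ f =>
  CplusProp f ∨ cZeroPlusProp f ∨ Jgl f ∨ IglGeOne f

/-! ### Small categories enriched in topological spaces -/

structure ECat : Type 1 where
  Obj : Type
  Hom : Obj → Obj → Type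
  str : ∀ a b, TopologicalSpace (Hom a b)
  eid : ∀ a, Hom a a
  comp : ∀ {a b c : Obj}, Hom a b → Hom b c → Hom a c
  continuous_comp : ∀ a b c, Continuous (fun p : Hom a b × Hom b c => comp p.1 p.2)
  id_comp : ∀ {a b : Obj} (f : Hom a b), comp (eid a) f = f
  comp_id : ∀ {a b : Obj} (f : Hom a b), comp f (eid b) = f
  assoc : ∀ {a b c d : Obj} (x : Hom a b) (y : Hom b c) (z : Hom c d),
    comp (comp x y) z = comp x (comp y z)

attribute [instance] ECat.str

/-- Topologically enriched functors, the morphisms of `ECat`. -/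
structure EFunctor (X Y : ECat) where
  toFun : X.Obj → Y.Obj
  map : ∀ {a b : X.Obj}, X.Hom a b → Y.Hom (toFun a) (toFun b)
  continuous_map : ∀ a b : X.Obj, Continuous fun p : X.Hom a b => map p
  map_id : ∀ a : X.Obj, map (X.eid a) = Y.eid (toFun a)
  map_comp : ∀ {a b c : X.Obj} (x : X.Hom a b) (y : X.Hom b c),
    map (X.comp x y) = Y.comp (map x) (map y)

instance : Category ECat where
  Hom := EFunctor
  id X := ⟨id, fun p => p, fun _ _ => continuous_id, fun _ => rfl, fun _ _ => rfl⟩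
  comp f g := ⟨g.toFun ∘ f.toFun, fun p => g.map (f.map p),
    fun a b => (g.continuous_map _ _).comp (f.continuous_map _ _),
    fun a => by simp only [f.map_id, g.map_id]; rfl,
    fun x y => by simp only [f.map_comp, g.map_comp]⟩

/-- The forgetful functor from enriched small categories to flows,
i.e. the inclusion `Cat ⊂ Flow`. -/
def forgetECat : ECat ⥤ DFlow where
  obj X := ⟨X.Obj, X.Hom, X.str, X.comp, X.continuous_comp, X.assoc⟩
  map f := ⟨f.toFun, f.map, f.continuous_map, f.map_comp⟩
  map_id _ := rfl
  map_comp _ _ := rfl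

/-! ### Weak homotopy equivalences and Serre fibrations -/

/-- The map induced on path components by a continuous map. -/
def zerothMap {X Y : Type} [TopologicalSpace X] [TopologicalSpace Y] (f : C(X, Y)) :
    ZerothHomotopy X → ZerothHomotopy Y :=
  Quotient.map' f (fun a b (h : Joined a b) => (⟨h.somePath.map f.continuous⟩ : Joined _ _))

/-- The map induced on generalized loops by a continuous map. -/
def genLoopMap {X Y : Type} [TopologicalSpace X] [TopologicalSpace Y] (f : C(X, Y))
    {N : Type} {x : X} (g : GenLoop N X x) : GenLoop N Y (f x) :=
  ⟨f.comp g.1, fun y hy => by simp [g.2 y hy]⟩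

/-- The map induced on homotopy groups by a continuous map. -/
def homotopyGroupMap {X Y : Type} [TopologicalSpace X] [TopologicalSpace Y] (f : C(X, Y))
    (N : Type) (x : X) : HomotopyGroup N X x → HomotopyGroup N Y (f x) :=
  Quotient.map' (genLoopMap f)
    (fun g h (H : GenLoop.Homotopic g h) =>
      (H.elim (fun K => ⟨K.compContinuousMap f⟩) : GenLoop.Homotopic _ _))

/-- A continuous map is a weak homotopy equivalence if it induces a bijection on
path components and bijections on all homotopy groups at all base points. -/
def IsWeakHomotopyEquiv {X Y : Type} [TopologicalSpace X] [TopologicalSpace Y]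
    (f : C(X, Y)) : Prop :=
  Function.Bijective (zerothMap f) ∧
    ∀ (n : ℕ) (x : X), Function.Bijective (homotopyGroupMap f (Fin n) x)

/-- A continuous map is a Serre fibration (q-fibration) if it has the homotopy lifting
property with respect to all disks. -/
def IsSerreFibration {X Y : Type} [TopologicalSpace X] [TopologicalSpace Y]
    (f : C(X, Y)) : Prop :=
  ∀ (n : ℕ) (g : C(gDisk n, X)) (H : C(gDisk n × unitInterval, Y)),
    (∀ d, H (d, 0) = f (g d)) →
    ∃ G : C(gDisk n × unitInterval, X),
      (∀ d, G (d, 0) = g d) ∧ ∀ p, f (G p) = H p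

/-! ### The fundamental category of a topologically enriched small category -/

lemma joined_comp {X : ECat} {a b c : X.Obj} {x x' : X.Hom a b} {y y' : X.Hom b c}
    (hx : Joined x x') (hy : Joined y y') : Joined (X.comp x y) (X.comp x' y') :=
  ⟨(hx.somePath.prod hy.somePath).map (X.continuous_comp a b c)⟩

/-- The objects of the fundamental category of an enriched small category. -/
def FundCat (X : ECat) : Type := X.Obj

/-- The fundamental category: same objects, morphisms the path components
of the spaces of morphisms. -/
instance fundCatCategory (X : ECat) : Category (FundCat X) where
  Hom a b := @ZerothHomotopy (X.Hom a b) (X.str a b)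
  id a := @Quotient.mk' _ (@pathSetoid _ (X.str a a)) (X.eid a)
  comp {a b c} f g :=
    Quotient.map₂' (fun x y => X.comp x y) (fun _ _ hx _ _ hy => joined_comp hx hy) f g
  id_comp {a b} f := by
    induction f using Quotient.inductionOn' with
    | h x => exact congrArg (Quotient.mk'') (X.id_comp x)
  comp_id {a b} f := by
    induction f using Quotient.inductionOn' with
    | h x => exact congrArg (Quotient.mk'') (X.comp_id x)
  assoc {a b c d} f g h := by
    induction f using Quotient.inductionOn' with
    | h x =>
      induction g using Quotient.inductionOn' with
      | h y =>
        induction h using Quotient.inductionOn' with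
        | h z => exact congrArg (Quotient.mk'') (X.assoc x y z)

/-- The fundamental category functor induced by an enriched functor. -/
def fundFunctor {X Y : ECat} (F : EFunctor X Y) : FundCat X ⥤ FundCat Y where
  obj a := F.toFun a
  map {a b} f :=
    Quotient.map' (s₁ := @pathSetoid _ (X.str a b)) (s₂ := @pathSetoid _ (Y.str _ _)) (fun x => F.map x)
      (fun x x' (h : @Joined _ (X.str a b) x x') =>
        (letI := X.str a b; ⟨h.somePath.map (F.continuous_map a b)⟩ : @Joined _ (Y.str _ _) _ _)) f
  map_id a := congrArg (Quotient.mk'') (F.map_id a)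
  map_comp {a b c} f g := by
    induction f using Quotient.inductionOn' with
    | h x =>
      induction g using Quotient.inductionOn' with
      | h y => exact congrArg (Quotient.mk'') (F.map_comp x y)

/-- Dwyer–Kan equivalences: the weak equivalences of the Ilias model structure. -/
def WDK : MorphismProperty ECat := fun X _ F =>
  (∀ a b : X.Obj, IsWeakHomotopyEquiv ⟨fun x : X.Hom a b => F.map x, F.continuous_map a b⟩) ∧
    (fundFunctor F).IsEquivalence

/-! ### Miscellaneous constructions -/

/-- The image of a class of maps of flows under a functor `Flow ⥤ Cat`. -/
def imageProp (Idf : DFlow ⥤ ECat) (P : MorphismProperty DFlow) : MorphismProperty ECat :=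
  fun A B g => ∃ (X Y : DFlow) (f : X ⟶ Y), P f ∧
    ∃ (_ : Idf.obj X = A) (_ : Idf.obj Y = B), HEq (Idf.map f) g

/-- The inverse image of a class of maps of enriched categories under a functor. -/
def invImageProp (Idf : DFlow ⥤ ECat) (P : MorphismProperty ECat) : MorphismProperty DFlow :=
  fun _ _ f => P (Idf.map f)

/-- The terminal enriched small category. -/
def terminalECat : ECat where
  Obj := PUnit
  Hom _ _ := PUnit
  str _ _ := ⊥
  eid _ := PUnit.unit
  comp _ _ := PUnit.unit
  continuous_comp _ _ _ := continuous_const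
  id_comp _ := rfl
  comp_id _ := rfl
  assoc _ _ _ := rfl

/-- The canonical enriched functor to the terminal enriched category. -/
def ECat.toTerminal (X : ECat) : X ⟶ terminalECat :=
  ⟨fun _ => PUnit.unit, fun _ => PUnit.unit,
    fun _ _ => letI := terminalECat.str PUnit.unit PUnit.unit; continuous_const,
    fun _ => rfl, fun _ _ => rfl⟩

/-- The empty enriched small category. -/
def emptyECat : ECat where
  Obj := Empty
  Hom a _ := a.elim
  str a _ := a.elim
  eid a := a.elim
  comp {a} _ _ := a.elim
  continuous_comp a _ _ := a.elim
  id_comp {a} _ := a.elim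
  comp_id {a} _ := a.elim
  assoc {a} _ _ _ := a.elim

/-- The canonical enriched functor from the empty enriched category. -/
def ECat.fromEmpty (X : ECat) : emptyECat ⟶ X :=
  ⟨fun a => a.elim, fun {a} _ => a.elim, fun a _ => a.elim, fun a => a.elim,
    fun {a} _ _ => a.elim⟩

/-- The small category `{0 ≅ 1}` with two isomorphic objects,
the chaotic category on two objects. -/
def isoCat : ECat where
  Obj := Bool
  Hom _ _ := PUnit
  str _ _ := ⊥
  eid _ := PUnit.unit
  comp _ _ := PUnit.unit
  continuous_comp _ _ _ := continuous_const
  id_comp _ := rfl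
  comp_id _ := rfl
  assoc _ _ _ := rfl

/-- The cofibrations of the Ilias model structure: `C_DK = cof(𝕀(I^gl ∪ {C}))`. -/
def CDK (Idf : DFlow ⥤ ECat) : MorphismProperty ECat :=
  cofClass (imageProp Idf IglC)

theorem FlowHom.ext_of_heq {X Y : DFlow} {f g : X ⟶ Y} (h_toFun : f.toFun = g.toFun)
    (h_map : ∀ (α β : X.States) (x : X.Path α β), HEq (f.map x) (g.map x)) : f = g := by
  obtain ⟨ft, fm, _, _⟩ := f
  obtain ⟨gt, gm, _, _⟩ := g
  obtain rfl : ft = gt := h_toFun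
  obtain rfl : @fm = @gm :=
    funext fun α => funext fun β => funext fun x => eq_of_heq (h_map α β x)
  rfl

theorem FlowHom.ext_of_isEmpty_path {X Y : DFlow} (hX : ∀ α β, IsEmpty (X.Path α β))
    {f g : X ⟶ Y} (h : f.toFun = g.toFun) : f = g :=
  FlowHom.ext_of_heq h fun α β x => (hX α β).elim x

theorem FlowHom.ext_of_subsingleton_path {X Y : DFlow} (hY : ∀ α β, Subsingleton (Y.Path α β))
    {f g : X ⟶ Y} (h : f.toFun = g.toFun) : f = g :=
  FlowHom.ext_of_heq h fun α β _ => by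
    have := hY (f.toFun α) (f.toFun β)
    exact Subsingleton.helim (by rw [h]) _ _

def DFlow.toForgetIsoCat (X : DFlow) (f : X.States → Bool) : X ⟶ forgetECat.obj isoCat :=
  ⟨f, fun _ => PUnit.unit, fun α β => @continuous_const _ _ _ (isoCat.str (f α) (f β)) _,
    fun _ _ => rfl⟩

theorem hasLiftingProperty_forget_isoCat_of_injective {A B : DFlow} (i : A ⟶ B)
    (hi : Function.Injective i.toFun) :
    HasLiftingProperty i (forgetECat.map (ECat.toTerminal isoCat)) where
  sq_hasLift {f _} _ := by
    let e : B.States → Bool := Function.extend i.toFun f.toFun fun _ => false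
    have he : ∀ a, e (i.toFun a) = f.toFun a := hi.extend_apply _ _
    exact CommSq.HasLift.mk' ⟨B.toForgetIsoCat e,
      FlowHom.ext_of_subsingleton_path (fun _ _ => inferInstanceAs (Subsingleton PUnit))
        (funext he),
      FlowHom.ext_of_subsingleton_path (fun _ _ => inferInstanceAs (Subsingleton PUnit)) rfl⟩

theorem rlpClass_IglC_toTerminal_isoCat {Idf : DFlow ⥤ ECat} (adj : Idf ⊣ forgetECat) :
    rlpClass (imageProp Idf IglC) (ECat.toTerminal isoCat) := by
  rintro _ _ _ ⟨X, Y, f, hf, rfl, rfl, hf_heq⟩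
  obtain rfl := eq_of_heq hf_heq
  rw [adj.hasLiftingProperty_iff]
  apply hasLiftingProperty_forget_isoCat_of_injective
  rcases hf with ⟨n, rfl, rfl, hc⟩ | ⟨rfl, rfl, hc⟩
  · obtain rfl := eq_of_heq hc
    exact Function.injective_id
  · obtain rfl := eq_of_heq hc
    exact fun a => a.elim

theorem injective_toFun_of_map_mem_CDK {Idf : DFlow ⥤ ECat} (adj : Idf ⊣ forgetECat)
    {Z : DFlow} (i : twoFlow ⟶ Z) (hi : CDK Idf (Idf.map i)) : Function.Injective i.toFun := by
  have hlift : HasLiftingProperty i (forgetECat.map (ECat.toTerminal isoCat)) :=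
    (adj.hasLiftingProperty_iff _ _).mp (hi _ (rlpClass_IglC_toTerminal_isoCat adj))
  have sq : CommSq (twoFlow.toForgetIsoCat id) i (forgetECat.map (ECat.toTerminal isoCat))
      Z.toTerminal :=
    ⟨FlowHom.ext_of_subsingleton_path (fun _ _ => inferInstanceAs (Subsingleton PUnit)) rfl⟩
  have := hlift.sq_hasLift sq
  have h_retract : ∀ a, sq.lift.toFun (i.toFun a) = a := fun a =>
    congrFun (congrArg FlowHom.toFun sq.fac_left) a
  exact Function.LeftInverse.injective h_retract

theorem pathConnectedSpace_of_bijective_zerothMap {X Y : Type} [TopologicalSpace X]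
    [TopologicalSpace Y] [PathConnectedSpace Y] (f : C(X, Y))
    (hf : Function.Bijective (zerothMap f)) : PathConnectedSpace X := by
  obtain ⟨hY_nonempty, hY_subsingleton⟩ := pathConnectedSpace_iff_zerothHomotopy.mp ‹_›
  let e := Equiv.ofBijective _ hf
  exact pathConnectedSpace_iff_zerothHomotopy.mpr
    ⟨e.nonempty_congr.mpr hY_nonempty, e.subsingleton⟩

theorem EFunctor.map_heq_of_eq_id {A : ECat} {G : A ⟶ A} (hG : G = 𝟙 A) {c d : A.Obj}
    (m : A.Hom c d) : HEq (G.map m) m := by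
  subst hG
  rfl

theorem ECat.pathConnectedSpace_hom_of_retract_terminal {A : ECat} (r : A ⟶ terminalECat)
    (s : terminalECat ⟶ A) (h : r ≫ s = 𝟙 A) (c d : A.Obj) :
    PathConnectedSpace (A.Hom c d) := by
  have h_obj (c : A.Obj) : s.toFun PUnit.unit = c := congrFun (congrArg EFunctor.toFun h) c
  have : Nonempty (A.Hom c d) := by
    rw [← h_obj c, ← h_obj d]
    exact ⟨A.eid _⟩
  have : Subsingleton (A.Hom c d) :=
    ⟨fun m m' => eq_of_heq ((EFunctor.map_heq_of_eq_id h m).symm.trans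
      (EFunctor.map_heq_of_eq_id h m'))⟩
  infer_instance

theorem CategoryTheory.Adjunction.pathConnectedSpace_hom_obj_pointFlow {Idf : DFlow ⥤ ECat}
    (adj : Idf ⊣ forgetECat) (c d : (Idf.obj pointFlow).Obj) :
    PathConnectedSpace ((Idf.obj pointFlow).Hom c d) := by
  let x₀ : (Idf.obj pointFlow).Obj := (adj.unit.app pointFlow).toFun PUnit.unit
  let s : terminalECat ⟶ Idf.obj pointFlow :=
    ⟨fun _ => x₀, fun _ => (Idf.obj pointFlow).eid x₀,
      fun a b => @continuous_const _ _ (terminalECat.str a b) _ _,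
      fun _ => rfl, fun _ _ => ((Idf.obj pointFlow).id_comp _).symm⟩
  refine ECat.pathConnectedSpace_hom_of_retract_terminal (ECat.toTerminal _) s ?_ c d
  apply (adj.homEquiv _ _).injective
  simp only [Adjunction.homEquiv_unit]
  exact FlowHom.ext_of_isEmpty_path (fun _ _ => inferInstanceAs (IsEmpty Empty)) rfl

theorem Joined.eq_of_discreteTopology {X : Type} [TopologicalSpace X] [DiscreteTopology X]
    {x y : X} (h : Joined x y) : x = y := by
  obtain ⟨γ⟩ := h
  simpa using PreconnectedSpace.constant inferInstance γ.continuous (x := 0) (y := 1)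

/-- `Hom a a = {id, e}` and `Hom a b = {e}` for `a ≠ b`, with `e` absorbing (the flag `true`)
and discrete topologies. A composite through a different object is `e`, so it is never in the
path component of an identity. -/
def ECat.nonIdFlag (S : Type) : ECat where
  Obj := S
  Hom a b := {x : Bool // a = b ∨ x = true}
  str _ _ := inferInstance
  eid _ := ⟨false, Or.inl rfl⟩
  comp x y := ⟨x.1 || y.1, by
    rcases x with ⟨_, rfl | rfl⟩ <;> rcases y with ⟨_, rfl | rfl⟩ <;> simp⟩
  continuous_comp _ _ _ := continuous_of_discreteTopology
  id_comp _ := rfl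
  comp_id x := Subtype.ext (Bool.or_false x.1)
  assoc x y z := Subtype.ext (Bool.or_assoc x.1 y.1 z.1)

instance (S : Type) (a b : (ECat.nonIdFlag S).Obj) :
    DiscreteTopology ((ECat.nonIdFlag S).Hom a b) :=
  inferInstanceAs (DiscreteTopology {x : Bool // a = b ∨ x = true})

theorem ECat.nonIdFlag.eq_of_comp_eq_eid {S : Type} {a b : (nonIdFlag S).Obj}
    (x : (nonIdFlag S).Hom a b) (y : (nonIdFlag S).Hom b a)
    (h : (nonIdFlag S).comp x y = (nonIdFlag S).eid a) : a = b := by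
  obtain ⟨_, rfl | rfl⟩ := x
  · rfl
  · simp [nonIdFlag] at h

def DFlow.toForgetNonIdFlag (Z : DFlow) : Z ⟶ forgetECat.obj (ECat.nonIdFlag Z.States) :=
  ⟨id, fun _ => ⟨true, Or.inr rfl⟩,
    fun α β => @continuous_const _ _ _ ((ECat.nonIdFlag Z.States).str α β) _, fun _ _ => rfl⟩

theorem subsingleton_states_of_map_mem_WDK {Idf : DFlow ⥤ ECat} (adj : Idf ⊣ forgetECat)
    {Z : DFlow} (p : Z ⟶ pointFlow) (hp : WDK (Idf.map p)) : Subsingleton Z.States := by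
  let η : Z.States → (Idf.obj Z).Obj := (adj.unit.app Z).toFun
  have h_conn (a b : (Idf.obj Z).Obj) : PathConnectedSpace ((Idf.obj Z).Hom a b) :=
    haveI := adj.pathConnectedSpace_hom_obj_pointFlow ((Idf.map p).toFun a) ((Idf.map p).toFun b)
    pathConnectedSpace_of_bijective_zerothMap _ (hp.1 a b).1
  let lam : Idf.obj Z ⟶ ECat.nonIdFlag Z.States := (adj.homEquiv _ _).symm Z.toForgetNonIdFlag
  have h_lam (s : Z.States) : lam.toFun (η s) = s := by
    have h := (adj.homEquiv _ _).apply_symm_apply Z.toForgetNonIdFlag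
    rw [Adjunction.homEquiv_unit] at h
    exact congrFun (congrArg FlowHom.toFun h) s
  refine ⟨fun s t => ?_⟩
  obtain ⟨u⟩ := (h_conn (η s) (η t)).nonempty
  obtain ⟨v⟩ := (h_conn (η t) (η s)).nonempty
  have h_joined := ((h_conn _ _).joined ((Idf.obj Z).comp u v) ((Idf.obj Z).eid _)).map
    (lam.continuous_map _ _)
  rw [lam.map_comp, lam.map_id] at h_joined
  rw [← h_lam s, ← h_lam t]
  exact ECat.nonIdFlag.eq_of_comp_eq_eid _ _ h_joined.eq_of_discreteTopology

/-- there is no model structure on `Flow` whose cofibrations are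
`𝕀⁻¹(C_DK)` and whose weak equivalences are `𝕀⁻¹(W_DK)`: the Ilias model structure
cannot be left-lifted to flows along the left adjoint `𝕀`. -/
theorem no_left_lifted_Ilias_model_structure
    (Idf : DFlow ⥤ ECat) (adj : Idf ⊣ forgetECat) :
    ¬ ∃ MS : ModelStructure DFlow,
        MS.C = invImageProp Idf (CDK Idf) ∧ MS.W = invImageProp Idf WDK := by
  rintro ⟨MS, hC, hW⟩
  obtain ⟨Z, i, p, hi, -, hp, -⟩ := MS.factor_triv_fib Rmap
  rw [hC] at hi
  rw [hW] at hp
  have h_inj : Function.Injective i.toFun := injective_toFun_of_map_mem_CDK adj i hi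
  have : Subsingleton Z.States := subsingleton_states_of_map_mem_WDK adj p hp
  exact Bool.false_ne_true (h_inj (Subsingleton.elim _ _))
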